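/- Let $r, t, x$ be positive integers with $x \geq 1$, and let $\mathcal{C} \subseteq \mathbb{F}_q^n$ be an $(r,t,x)$-LRC code. Then $\log_q |\mathcal{C}| \leq n\,(1 - f(r,t,x))$; that is, the rate of $\mathcal{C}$ satisfies $R(\mathcal{C}) \leq R^{*}(r,t,x) = 1 - f(r,t,x)$. -/

import Mathlib

/-- The parameter `s = min {j, ⌊r/x⌋ + 1}`. -/
def sPar (r j x : ℕ) : ℕ := min j (r / x + 1)

/-- The lower bound `N̲(r,j,x) = (2r - (s-1)x)·s / 2`. -/
def Nlow (r j x : ℕ) : ℚ :=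
  ((2 * r : ℚ) - ((sPar r j x : ℚ) - 1) * x) * (sPar r j x : ℚ) / 2

/-- The upper bound `N̄(r,j,x) = j·r`. -/
def Nbar (r j x : ℕ) : ℕ := j * r

/-- `f(r,t,x) = ∑_{j odd} C(t,j)/(N̄(r,j,x)+1) - ∑_{j even} C(t,j)/(N̲(r,j,x)+1)`. -/
def fLRC (r t x : ℕ) : ℚ :=
  (∑ j ∈ Finset.Icc 1 t,
      if Odd j then (t.choose j : ℚ) / ((Nbar r j x : ℚ) + 1) else 0)
  - (∑ j ∈ Finset.Icc 1 t,
      if Even j then (t.choose j : ℚ) / (Nlow r j x + 1) else 0)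

/-- A code `C ⊆ F^n` is an `(r,t,x)`-LRC code: every coordinate `i` has `t`
recovering sets `R_i^1, …, R_i^t ⊆ [n] \ {i}` of cardinality at most `r`, any two
of which intersect in at most `x` coordinates, and for each `j` the restrictions to
`R_i^j` of `C(i,a)` and `C(i,a')` are disjoint whenever `a ≠ a'`. -/
def IsRTXLRC {n : ℕ} {F : Type*} (C : Finset (Fin n → F)) (r t x : ℕ) : Prop :=
  ∀ i : Fin n, ∃ R : Fin t → Finset (Fin n),
    (∀ j, i ∉ R j) ∧
    (∀ j, (R j).card ≤ r) ∧
    (∀ l l', l ≠ l' → ((R l) ∩ (R l')).card ≤ x) ∧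
    (∀ j : Fin t, ∀ a a' : F, a ≠ a' → ∀ c ∈ C, ∀ c' ∈ C, c i = a → c' i = a' →
      ∃ m ∈ R j, c m ≠ c' m)

set_option maxHeartbeats 1600000


open Finset in
lemma count_max_eq {α β : Type*} [Fintype α] [DecidableEq α] [Fintype β] [LinearOrder β]
    [DecidableEq β] (a : α) (U : Finset α) (ha : a ∉ U) :
    (Finset.univ.filter fun σ : α ≃ β => ∀ m ∈ U, σ m < σ a).card * (U.card + 1)
      = Fintype.card (α ≃ β) := by
  classical
  set V : Finset α := insert a U with hV
  have haV : a ∈ V := mem_insert_self a U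
  set T : α → Finset (α ≃ β) :=
    fun b => Finset.univ.filter fun σ : α ≃ β => ∀ m ∈ V, σ m ≤ σ b with hT
  -- all the classes T b, b ∈ V, have the same cardinality
  have hTcard : ∀ b ∈ V, (T b).card = (T a).card := by
    intro b hb
    have hswapV : ∀ m ∈ V, Equiv.swap a b m ∈ V := by
      intro m hm
      rcases eq_or_ne m a with rfl | hma
      · simpa [Equiv.swap_apply_left] using hb
      rcases eq_or_ne m b with rfl | hmb
      · simpa [Equiv.swap_apply_right] using haV
      · rwa [Equiv.swap_apply_of_ne_of_ne hma hmb]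
    refine (Finset.card_bij (fun σ _ => (Equiv.swap a b).trans σ) ?_ ?_ ?_).symm
    · intro σ hσ
      simp only [hT, mem_filter, mem_univ, true_and] at hσ ⊢
      intro m hm
      have h1 := hσ _ (hswapV m hm)
      simpa [Equiv.trans_apply, Equiv.swap_apply_left] using h1
    · intro σ₁ h₁ σ₂ h₂ h
      have := congrArg (fun e => (Equiv.swap a b).trans e) h
      simpa [← Equiv.trans_assoc, Equiv.swap_swap] using this
    · intro τ hτ
      refine ⟨(Equiv.swap a b).trans τ, ?_, ?_⟩
      · simp only [hT, mem_filter, mem_univ, true_and] at hτ ⊢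
        intro m hm
        have h1 := hτ _ (hswapV m hm)
        simpa [Equiv.trans_apply, Equiv.swap_apply_right] using h1
      · simp [← Equiv.trans_assoc, Equiv.swap_swap]
  -- the classes T b partition everything, via the argmax function
  have hVne : ∀ σ : α ≃ β, (V.image σ).Nonempty := fun σ => ⟨σ a, mem_image_of_mem σ haV⟩
  set g : (α ≃ β) → α := fun σ => σ.symm ((V.image σ).max' (hVne σ)) with hg
  have hgV : ∀ σ : α ≃ β, g σ ∈ V := by
    intro σ
    obtain ⟨m, hm, hm'⟩ := mem_image.1 ((V.image σ).max'_mem (hVne σ))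
    rw [hg]; simpa [← hm'] using hm
  have hfiber : ∀ b ∈ V, univ.filter (fun σ => g σ = b) = T b := by
    intro b hb
    ext σ
    simp only [mem_filter, mem_univ, true_and, hT]
    constructor
    · intro h m hm
      have hb' : σ b = (V.image σ).max' (hVne σ) := by
        conv_lhs => rw [← h]
        exact Equiv.apply_symm_apply σ _
      rw [hb']
      exact le_max' _ _ (mem_image_of_mem σ hm)
    · intro h
      have hmax : (V.image σ).max' (hVne σ) = σ b := by
        refine le_antisymm (max'_le _ _ _ ?_) (le_max' _ _ (mem_image_of_mem σ hb))
        intro y hy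
        obtain ⟨m, hm, rfl⟩ := mem_image.1 hy
        exact h m hm
      show σ.symm ((V.image σ).max' (hVne σ)) = b
      rw [hmax, Equiv.symm_apply_apply]
  have hpart : Fintype.card (α ≃ β) = ∑ b ∈ V, (T b).card := by
    rw [← Finset.card_univ]
    rw [Finset.card_eq_sum_card_fiberwise (f := g) (fun σ _ => hgV σ)]
    exact Finset.sum_congr rfl fun b hb => by rw [hfiber b hb]
  have hTa : T a = Finset.univ.filter fun σ : α ≃ β => ∀ m ∈ U, σ m < σ a := by
    ext σ
    simp only [hT, mem_filter, mem_univ, true_and]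
    constructor
    · intro h m hm
      have h1 := h m (mem_insert_of_mem hm)
      have h2 : σ m ≠ σ a := fun hc => ha (by rwa [σ.injective hc] at hm)
      exact lt_of_le_of_ne h1 h2
    · intro h m hm
      rcases mem_insert.1 hm with rfl | hm'
      · exact le_refl _
      · exact le_of_lt (h m hm')
  have hVcard : V.card = U.card + 1 := card_insert_of_notMem ha
  rw [hpart, Finset.sum_congr rfl hTcard, Finset.sum_const, smul_eq_mul, hVcard, ← hTa]
  ring

open Finset in
lemma two_mul_sum_card_le {ι Ω : Type*} [DecidableEq ι] [DecidableEq Ω]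
    (B : ι → Finset Ω) (S : Finset ι) :
    2 * ∑ l ∈ S, (B l).card
      ≤ 2 * (S.biUnion B).card + ∑ p ∈ S.offDiag, (B p.1 ∩ B p.2).card := by
  induction S using Finset.induction_on with
  | empty => simp
  | @insert a S ha ih =>
    have h1 : (B a ∩ S.biUnion B).card ≤ ∑ l ∈ S, (B a ∩ B l).card := by
      rw [Finset.inter_biUnion]
      exact Finset.card_biUnion_le
    have h3 : ((insert a S).biUnion B).card + (B a ∩ S.biUnion B).card
        = (B a).card + (S.biUnion B).card := by
      rw [Finset.biUnion_insert]
      exact card_union_add_card_inter _ _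
    have hd1 : Disjoint (S.offDiag) ({a} ×ˢ S) := by
      rw [Finset.disjoint_left]
      rintro ⟨p1, p2⟩ hp hq
      rw [Finset.mem_offDiag] at hp
      rw [Finset.mem_product, Finset.mem_singleton] at hq
      exact ha (hq.1 ▸ hp.1)
    have hd2 : Disjoint (S.offDiag ∪ {a} ×ˢ S) (S ×ˢ {a}) := by
      rw [Finset.disjoint_left]
      rintro ⟨p1, p2⟩ hp hq
      rw [Finset.mem_product, Finset.mem_singleton] at hq
      rcases Finset.mem_union.1 hp with hp | hp
      · rw [Finset.mem_offDiag] at hp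
        exact ha (hq.2 ▸ hp.2.1)
      · rw [Finset.mem_product, Finset.mem_singleton] at hp
        exact ha (hp.1 ▸ hq.1)
    have h4 : ∑ p ∈ (insert a S).offDiag, (B p.1 ∩ B p.2).card
        = ∑ p ∈ S.offDiag, (B p.1 ∩ B p.2).card
          + ∑ l ∈ S, (B a ∩ B l).card + ∑ l ∈ S, (B l ∩ B a).card := by
      rw [Finset.offDiag_insert (s := S) (a := a) ha, Finset.sum_union hd2, Finset.sum_union hd1]
      congr 1
      · congr 1
        rw [Finset.singleton_product, Finset.sum_map]
        rfl
      · rw [Finset.product_singleton, Finset.sum_map]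
        rfl
    have h5 : ∑ l ∈ S, (B l ∩ B a).card = ∑ l ∈ S, (B a ∩ B l).card := by
      simp [Finset.inter_comm]
    rw [Finset.sum_insert ha, h4, h5]
    omega

open Finset in
lemma sPar_sub_one_mul_le {r j x : ℕ} (hx : 1 ≤ x) : (sPar r j x - 1) * x ≤ r := by
  have h1 : sPar r j x - 1 ≤ r / x := by
    have h := min_le_right j (r / x + 1)
    have h' : sPar r j x ≤ r / x + 1 := h
    have h2 := Nat.sub_le_sub_right h' 1
    simpa using h2
  calc (sPar r j x - 1) * x ≤ (r / x) * x := Nat.mul_le_mul_right x h1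
    _ ≤ r := Nat.div_mul_le_self r x

open Finset in
lemma nlow_nonneg (r j x : ℕ) (hx : 1 ≤ x) : 0 ≤ Nlow r j x := by
  have h := sPar_sub_one_mul_le (r := r) (j := j) (x := x) hx
  rcases Nat.eq_zero_or_pos (sPar r j x) with h0 | h0
  · simp [Nlow, h0]
  · have hcast : ((sPar r j x : ℚ) - 1) * x ≤ r := by
      have : (((sPar r j x - 1) * x : ℕ) : ℚ) ≤ (r : ℚ) := by exact_mod_cast h
      rw [Nat.cast_mul, Nat.cast_sub h0] at this
      simpa using this
    unfold Nlow
    apply div_nonneg _ (by norm_num)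
    apply mul_nonneg _ (by positivity)
    have : (0:ℚ) ≤ r := by positivity
    linarith

open Finset in
lemma nlow_le_card {ι Ω : Type*} [DecidableEq ι] [DecidableEq Ω] {B : ι → Finset Ω}
    {S : Finset ι} {r x : ℕ} (hx : 1 ≤ x)
    (hcard : ∀ l ∈ S, (B l).card = r)
    (hint : ∀ l ∈ S, ∀ l' ∈ S, l ≠ l' → (B l ∩ B l').card ≤ x) :
    Nlow r S.card x ≤ ((S.biUnion B).card : ℚ) := by
  set s := sPar r S.card x with hs
  have hsle : s ≤ S.card := min_le_left _ _
  obtain ⟨S', hS'sub, hS'card⟩ := Finset.exists_subset_card_eq hsle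
  have h1 := two_mul_sum_card_le B S'
  have h2 : ∑ l ∈ S', (B l).card = s * r := by
    rw [Finset.sum_congr rfl fun l hl => hcard l (hS'sub hl), Finset.sum_const, hS'card,
      smul_eq_mul]
  have h3 : ∑ p ∈ S'.offDiag, (B p.1 ∩ B p.2).card ≤ (s * s - s) * x := by
    calc ∑ p ∈ S'.offDiag, (B p.1 ∩ B p.2).card
        ≤ ∑ _p ∈ S'.offDiag, x := by
          apply Finset.sum_le_sum
          intro p hp
          rw [Finset.mem_offDiag] at hp
          exact hint p.1 (hS'sub hp.1) p.2 (hS'sub hp.2.1) hp.2.2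
      _ = (s * s - s) * x := by rw [Finset.sum_const, Finset.offDiag_card, hS'card, smul_eq_mul]
  have h4 : (S'.biUnion B).card ≤ (S.biUnion B).card :=
    Finset.card_le_card (Finset.biUnion_subset_biUnion_of_subset_left _ hS'sub)
  have h5 : 2 * (s * r) ≤ 2 * (S.biUnion B).card + (s * s - s) * x := by omega
  rcases Nat.eq_zero_or_pos s with h0 | h0
  · have : Nlow r S.card x = 0 := by rw [Nlow, ← hs, h0]; simp
    rw [this]; positivity
  · have hss : s ≤ s * s := Nat.le_mul_of_pos_left s h0
    have hcast : (2 * ((s:ℚ) * r)) ≤ 2 * ((S.biUnion B).card : ℚ) + ((s:ℚ) * s - s) * x := by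
      have h6 := (Nat.cast_le (α := ℚ)).2 h5
      push_cast [Nat.cast_sub hss] at h6
      linarith
    rw [Nlow, ← hs, div_le_iff₀ (by norm_num : (0:ℚ) < 2)]
    have hs1 : (1:ℚ) ≤ (s:ℚ) := by exact_mod_cast h0
    nlinarith [hcast]

open Finset in
lemma exists_good_order (n t r x : ℕ) (hx : 1 ≤ x)
    (R : Fin n → Fin t → Finset (Fin n))
    (hni : ∀ i j, i ∉ R i j) (hcard : ∀ i j, (R i j).card ≤ r)
    (hint : ∀ i (l l' : Fin t), l ≠ l' → (R i l ∩ R i l').card ≤ x) :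
    ∃ (g : Fin n → ℕ) (D : Finset (Fin n)),
      (n : ℚ) * fLRC r t x ≤ (D.card : ℚ) ∧
      ∀ i ∈ D, ∃ j : Fin t, ∀ m ∈ R i j, g m < g i := by
  classical
  -- the padded ground type
  have hΩcard : Fintype.card (Fin n ⊕ Fin t × Fin r) = n + t * r := by simp
  haveI : Nonempty ((Fin n ⊕ Fin t × Fin r) ≃ Fin (n + t * r)) :=
    ⟨Fintype.equivFinOfCardEq hΩcard⟩
  set M := Fintype.card ((Fin n ⊕ Fin t × Fin r) ≃ Fin (n + t * r)) with hM
  have hMpos : 0 < M := Fintype.card_pos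
  -- padded recovering sets
  have hpadlt : ∀ (i : Fin n) (j : Fin t), ∀ m ∈ Finset.range (r - (R i j).card), m < r :=
    fun i j m hm => lt_of_lt_of_le (Finset.mem_range.1 hm) (Nat.sub_le r _)
  set P : Fin n → Fin t → Finset (Fin n ⊕ Fin t × Fin r) := fun i j =>
    (R i j).map ⟨Sum.inl, Sum.inl_injective⟩ ∪
      ((Finset.range (r - (R i j).card)).attachFin (hpadlt i j)).map
        ⟨fun k => Sum.inr (j, k), fun k k' h => congrArg Prod.snd (Sum.inr_injective h)⟩ with hP
  have hPdisj : ∀ i j, Disjoint ((R i j).map ⟨Sum.inl, Sum.inl_injective⟩)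
      (((Finset.range (r - (R i j).card)).attachFin (hpadlt i j)).map
        ⟨fun k => Sum.inr (j, k), fun k k' h => congrArg Prod.snd (Sum.inr_injective h)⟩) := by
    intro i j
    rw [Finset.disjoint_left]
    rintro w hw hw'
    rw [Finset.mem_map] at hw hw'
    obtain ⟨m, _, rfl⟩ := hw
    obtain ⟨k, _, hk⟩ := hw'
    exact absurd hk (by simp)
  have hP1 : ∀ i j, (P i j).card = r := by
    intro i j
    rw [hP]
    rw [Finset.card_union_of_disjoint (hPdisj i j), Finset.card_map, Finset.card_map,
      Finset.card_attachFin, Finset.card_range]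
    have := hcard i j
    omega
  have hP2 : ∀ i j, Sum.inl i ∉ P i j := by
    intro i j hmem
    rw [hP, Finset.mem_union] at hmem
    rcases hmem with h | h
    · rw [Finset.mem_map] at h
      obtain ⟨m, hm, hm'⟩ := h
      have : m = i := by simpa using hm'
      exact hni i j (this ▸ hm)
    · rw [Finset.mem_map] at h
      obtain ⟨k, _, hk⟩ := h
      exact absurd hk (by simp)
  have hP3 : ∀ i j, ∀ m ∈ R i j, Sum.inl m ∈ P i j := by
    intro i j m hm
    rw [hP]
    exact Finset.mem_union_left _ (Finset.mem_map_of_mem _ hm)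
  have hP4 : ∀ i (l l' : Fin t), l ≠ l' → (P i l ∩ P i l').card ≤ x := by
    intro i l l' hll
    have hsub : P i l ∩ P i l' ⊆ (R i l ∩ R i l').map ⟨Sum.inl, Sum.inl_injective⟩ := by
      intro w hw
      rw [Finset.mem_inter] at hw
      obtain ⟨hwl, hwl'⟩ := hw
      rw [hP, Finset.mem_union, Finset.mem_map, Finset.mem_map] at hwl hwl'
      match w with
      | Sum.inl m =>
        have hm1 : m ∈ R i l := by
          rcases hwl with ⟨m', hm', he⟩ | ⟨k, _, he⟩
          · have : m' = m := by simpa using he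
            exact this ▸ hm'
          · exact absurd he (by simp)
        have hm2 : m ∈ R i l' := by
          rcases hwl' with ⟨m', hm', he⟩ | ⟨k, _, he⟩
          · have : m' = m := by simpa using he
            exact this ▸ hm'
          · exact absurd he (by simp)
        rw [Finset.mem_map]
        exact ⟨m, Finset.mem_inter.2 ⟨hm1, hm2⟩, rfl⟩
      | Sum.inr (j, k) =>
        exfalso
        have hj1 : j = l := by
          rcases hwl with ⟨m', _, he⟩ | ⟨k', _, he⟩
          · exact absurd he (by simp)
          · exact (congrArg Prod.fst (Sum.inr_injective (he : Sum.inr (l, k') = Sum.inr (j, k)))).symm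
        have hj2 : j = l' := by
          rcases hwl' with ⟨m', _, he⟩ | ⟨k', _, he⟩
          · exact absurd he (by simp)
          · exact (congrArg Prod.fst (Sum.inr_injective (he : Sum.inr (l', k') = Sum.inr (j, k)))).symm
        exact hll (hj1 ▸ hj2 ▸ rfl)
    calc (P i l ∩ P i l').card ≤ ((R i l ∩ R i l').map _).card := Finset.card_le_card hsub
      _ ≤ x := by rw [Finset.card_map]; exact hint i l l' hll
  -- the events
  set A : Fin n → Fin t → Finset ((Fin n ⊕ Fin t × Fin r) ≃ Fin (n + t * r)) := fun i j =>
    Finset.univ.filter fun σ => ∀ m ∈ P i j, σ m < σ (Sum.inl i) with hA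
  -- the weight function
  set w : ℕ → ℚ := fun j =>
    if j = 0 then 0
    else if Odd j then (M : ℚ) / (j * r + 1) else -((M : ℚ) / (Nlow r j x + 1)) with hw
  -- per-coordinate inclusion-exclusion bound
  have key : ∀ i : Fin n,
      (M : ℚ) * fLRC r t x ≤ (((Finset.univ : Finset (Fin t)).biUnion (A i)).card : ℚ) := by
    intro i
    have hterm : ∀ (S : Finset (Fin t)) (hSne : S.Nonempty),
        w S.card ≤ (-1 : ℚ) ^ (S.card + 1) * ((S.inf' hSne (A i)).card : ℚ) := by
      intro S hSne
      have hScard : S.card ≠ 0 := Finset.card_ne_zero.2 hSne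
      have hinfS : S.inf' hSne (A i)
          = Finset.univ.filter fun σ => ∀ m ∈ S.biUnion (P i), σ m < σ (Sum.inl i) := by
        ext σ
        simp only [Finset.mem_inf', hA, Finset.mem_filter, Finset.mem_univ, true_and,
          Finset.mem_biUnion]
        constructor
        · rintro h m ⟨j, hj, hm⟩
          exact h j hj m hm
        · intro h j hj m hm
          exact h m ⟨j, hj, hm⟩
      have hmemU : Sum.inl i ∉ S.biUnion (P i) := by
        rw [Finset.mem_biUnion]
        rintro ⟨j, -, hj⟩
        exact hP2 i j hj
      have hcount : (S.inf' hSne (A i)).card * ((S.biUnion (P i)).card + 1) = M := by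
        rw [hinfS]
        exact count_max_eq _ _ hmemU
      have hupos : (0 : ℚ) < ((S.biUnion (P i)).card : ℚ) + 1 := by positivity
      have hcardinf : ((S.inf' hSne (A i)).card : ℚ)
          = (M : ℚ) / (((S.biUnion (P i)).card : ℚ) + 1) := by
        rw [eq_div_iff (by positivity)]
        exact_mod_cast hcount
      rcases Nat.even_or_odd S.card with hpar | hpar
      · -- even
        have hpow : (-1 : ℚ) ^ (S.card + 1) = -1 :=
          Odd.neg_one_pow (Even.add_one hpar)
        have hNu : Nlow r S.card x ≤ ((S.biUnion (P i)).card : ℚ) :=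
          nlow_le_card hx (fun l _ => hP1 i l) (fun l _ l' _ hll => hP4 i l l' hll)
        have hN0 : (0:ℚ) < Nlow r S.card x + 1 := by
          have := nlow_nonneg r S.card x hx
          linarith
        have hdiv : (M : ℚ) / (((S.biUnion (P i)).card : ℚ) + 1)
            ≤ (M : ℚ) / (Nlow r S.card x + 1) := by
          apply div_le_div_of_nonneg_left _ hN0 _
          · positivity
          · linarith
        rw [hw, hpow, hcardinf]
        simp only []
        rw [if_neg hScard, if_neg (Nat.not_odd_iff_even.2 hpar)]
        linarith
      · -- odd
        have hpow : (-1 : ℚ) ^ (S.card + 1) = 1 :=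
          Even.neg_one_pow (Odd.add_one hpar)
        have hur : (S.biUnion (P i)).card ≤ S.card * r := by
          calc (S.biUnion (P i)).card ≤ ∑ l ∈ S, (P i l).card := Finset.card_biUnion_le
            _ = S.card * r := by
              rw [Finset.sum_congr rfl fun l _ => hP1 i l, Finset.sum_const, smul_eq_mul]
        have hdiv : (M : ℚ) / ((S.card : ℚ) * r + 1)
            ≤ (M : ℚ) / (((S.biUnion (P i)).card : ℚ) + 1) := by
          apply div_le_div_of_nonneg_left _ hupos _
          · positivity
          · have : ((S.biUnion (P i)).card : ℚ) ≤ (S.card : ℚ) * r := by exact_mod_cast hur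
            linarith
        rw [hw, hpow, hcardinf]
        simp only []
        rw [if_neg hScard, if_pos hpar]
        linarith
    have hIE := congrArg (fun z : ℤ => (z : ℚ))
      (Finset.inclusion_exclusion_card_biUnion (Finset.univ : Finset (Fin t)) (A i))
    push_cast at hIE
    rw [hIE]
    refine le_trans ?_ (Finset.sum_le_sum (f := fun S => w S.1.card)
      (fun S _ => hterm S.1 (Finset.mem_filter.1 S.2).2))
    beta_reduce
    rw [Finset.univ_eq_attach, Finset.sum_attach _ (fun S : Finset (Fin t) => w S.card), Finset.sum_filter]
    have e1 : ∀ S ∈ (Finset.univ : Finset (Fin t)).powerset,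
        (if S.Nonempty then w S.card else 0) = w S.card := by
      intro S _
      by_cases hSne : S.Nonempty
      · rw [if_pos hSne]
      · rw [if_neg hSne]
        rw [Finset.not_nonempty_iff_eq_empty] at hSne
        rw [hw]
        simp [hSne]
    rw [Finset.sum_congr rfl e1, Finset.sum_powerset_apply_card (f := w)]
    have hcardt : (Finset.univ : Finset (Fin t)).card = t := by simp
    rw [hcardt]
    have e2 : ∑ m ∈ Finset.range (t + 1), (t.choose m) • w m
        = ∑ m ∈ Finset.Icc 1 t, (t.choose m) • w m := by
      refine (Finset.sum_subset ?_ ?_).symm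
      · intro m hm
        rw [Finset.mem_Icc] at hm
        rw [Finset.mem_range]
        omega
      · intro m hm hm'
        rw [Finset.mem_range] at hm
        rw [Finset.mem_Icc] at hm'
        have hm0 : m = 0 := by omega
        rw [hw]
        simp [hm0]
    rw [e2]
    apply le_of_eq
    rw [fLRC, mul_sub, Finset.mul_sum, Finset.mul_sum, ← Finset.sum_sub_distrib]
    apply Finset.sum_congr rfl
    intro j hj
    have hj0 : j ≠ 0 := by
      rw [Finset.mem_Icc] at hj
      omega
    rcases Nat.even_or_odd j with hpar | hpar
    · rw [hw]
      simp only []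
      rw [if_neg hj0, if_neg (Nat.not_odd_iff_even.2 hpar),
        if_neg (Nat.not_odd_iff_even.2 hpar), if_pos hpar, nsmul_eq_mul]
      ring
    · rw [hw]
      simp only []
      rw [if_neg hj0, if_pos hpar, if_pos hpar, if_neg (Nat.not_even_iff_odd.2 hpar),
        nsmul_eq_mul, Nbar]
      push_cast
      ring
  -- the determined set for an ordering σ
  set Dset : ((Fin n ⊕ Fin t × Fin r) ≃ Fin (n + t * r)) → Finset (Fin n) := fun σ =>
    Finset.univ.filter fun i => ∃ j : Fin t, ∀ m ∈ P i j, σ m < σ (Sum.inl i) with hD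
  -- double counting
  have hswap : ∑ i : Fin n, (((Finset.univ : Finset (Fin t)).biUnion (A i)).card)
      = ∑ σ : ((Fin n ⊕ Fin t × Fin r) ≃ Fin (n + t * r)), (Dset σ).card := by
    have e1 : ∀ i : Fin n, (Finset.univ : Finset (Fin t)).biUnion (A i)
        = Finset.univ.filter fun σ : ((Fin n ⊕ Fin t × Fin r) ≃ Fin (n + t * r)) =>
            ∃ j : Fin t, ∀ m ∈ P i j, σ m < σ (Sum.inl i) := by
      intro i
      ext σ
      simp [hA, Finset.mem_biUnion]
    calc ∑ i : Fin n, (((Finset.univ : Finset (Fin t)).biUnion (A i)).card)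
        = ∑ i : Fin n, ∑ σ : ((Fin n ⊕ Fin t × Fin r) ≃ Fin (n + t * r)),
            if ∃ j : Fin t, ∀ m ∈ P i j, σ m < σ (Sum.inl i) then 1 else 0 := by
          apply Finset.sum_congr rfl
          intro i _
          rw [e1 i, Finset.card_filter]
      _ = ∑ σ : ((Fin n ⊕ Fin t × Fin r) ≃ Fin (n + t * r)), ∑ i : Fin n,
            if ∃ j : Fin t, ∀ m ∈ P i j, σ m < σ (Sum.inl i) then 1 else 0 :=
          Finset.sum_comm
      _ = ∑ σ : ((Fin n ⊕ Fin t × Fin r) ≃ Fin (n + t * r)), (Dset σ).card := by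
          apply Finset.sum_congr rfl
          intro σ _
          rw [hD, Finset.card_filter]
  -- averaging: pick a good σ
  have hav : ∃ σ : ((Fin n ⊕ Fin t × Fin r) ≃ Fin (n + t * r)),
      (n : ℚ) * fLRC r t x ≤ ((Dset σ).card : ℚ) := by
    by_contra hcon
    push_neg at hcon
    have hlt : ∑ σ : ((Fin n ⊕ Fin t × Fin r) ≃ Fin (n + t * r)), ((Dset σ).card : ℚ)
        < ∑ _σ : ((Fin n ⊕ Fin t × Fin r) ≃ Fin (n + t * r)), (n : ℚ) * fLRC r t x := by
      apply Finset.sum_lt_sum_of_nonempty Finset.univ_nonempty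
      intro σ _
      exact hcon σ
    have hge : (M : ℚ) * ((n : ℚ) * fLRC r t x)
        ≤ ∑ σ : ((Fin n ⊕ Fin t × Fin r) ≃ Fin (n + t * r)), ((Dset σ).card : ℚ) := by
      have : (M : ℚ) * ((n : ℚ) * fLRC r t x) = ∑ _i : Fin n, (M : ℚ) * fLRC r t x := by
        rw [Finset.sum_const, Finset.card_univ, Fintype.card_fin, nsmul_eq_mul]
        ring
      rw [this]
      have hcast : ∑ σ : ((Fin n ⊕ Fin t × Fin r) ≃ Fin (n + t * r)), ((Dset σ).card : ℚ)
          = ((∑ σ : ((Fin n ⊕ Fin t × Fin r) ≃ Fin (n + t * r)), (Dset σ).card : ℕ) : ℚ) := by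
        push_cast
        rfl
      rw [hcast, ← hswap]
      push_cast
      exact Finset.sum_le_sum fun i _ => key i
    rw [Finset.sum_const, Finset.card_univ, nsmul_eq_mul, ← hM] at hlt
    linarith
  obtain ⟨σ, hσ⟩ := hav
  refine ⟨fun m => (σ (Sum.inl m)).val, Dset σ, hσ, ?_⟩
  intro i hi
  rw [hD, Finset.mem_filter] at hi
  obtain ⟨-, j, hj⟩ := hi
  refine ⟨j, fun m hm => ?_⟩
  exact hj (Sum.inl m) (hP3 i j m hm)
/-- the rate of an `(r,t,x)`-LRC code `C ⊆ F_q^n` satisfies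
`log_q |C| ≤ n (1 - f(r,t,x))`, i.e. `R(C) ≤ R*(r,t,x) = 1 - f(r,t,x)`. -/
theorem rate_upper_bound_rtx_lrc
    (n q r t x : ℕ) (hn : 0 < n) (hr : 0 < r) (ht : 0 < t) (hx : 1 ≤ x)
    {F : Type*} [Field F] [Fintype F] [DecidableEq F] (hq : Fintype.card F = q)
    (C : Finset (Fin n → F)) (hC : IsRTXLRC C r t x) :
    Real.logb q C.card ≤ (n : ℝ) * (1 - ((fLRC r t x : ℚ) : ℝ)) := by
  classical
  choose Rf h1 h2 h3 h4 using hC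
  obtain ⟨g, D, hDf, hDrec⟩ := exists_good_order n t r x hx Rf h1 h2 h3
  -- two codewords agreeing outside `D` are equal
  have hinj : ∀ c ∈ C, ∀ c' ∈ C, (∀ i : Fin n, i ∉ D → c i = c' i) → c = c' := by
    intro c hc c' hc' hagree
    by_contra hne
    have hW : (Finset.univ.filter fun i : Fin n => c i ≠ c' i).Nonempty := by
      rw [Finset.filter_nonempty_iff]
      obtain ⟨i, hi⟩ := Function.ne_iff.1 hne
      exact ⟨i, Finset.mem_univ i, hi⟩
    obtain ⟨i, hiW, himin⟩ := Finset.exists_min_image _ g hW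
    rw [Finset.mem_filter] at hiW
    have hiD : i ∈ D := by
      by_contra hiD
      exact hiW.2 (hagree i hiD)
    obtain ⟨j, hj⟩ := hDrec i hiD
    obtain ⟨m, hm, hcm⟩ := h4 i j (c i) (c' i) hiW.2 c hc c' hc' rfl rfl
    have hmW : m ∈ Finset.univ.filter fun i : Fin n => c i ≠ c' i :=
      Finset.mem_filter.2 ⟨Finset.mem_univ m, hcm⟩
    exact absurd (hj m hm) (not_lt.2 (himin m hmW))
  -- hence `C` embeds into the functions on the complement of `D`
  have hcardC : C.card ≤ q ^ (n - D.card) := by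
    have hmap : ∀ c ∈ C,
        (fun i : ↥((Dᶜ : Finset (Fin n))) => c i.1) ∈
          (Finset.univ : Finset (↥((Dᶜ : Finset (Fin n))) → F)) :=
      fun c _ => Finset.mem_univ _
    have hinj2 : Set.InjOn (fun c : Fin n → F => (fun i : ↥((Dᶜ : Finset (Fin n))) => c i.1))
        (C : Set (Fin n → F)) := by
      intro c hc c' hc' he
      apply hinj c hc c' hc'
      intro i hiD
      have hi : i ∈ (Dᶜ : Finset (Fin n)) := Finset.mem_compl.2 hiD
      exact congrFun he ⟨i, hi⟩
    calc C.card ≤ (Finset.univ : Finset (↥((Dᶜ : Finset (Fin n))) → F)).card :=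
          Finset.card_le_card_of_injOn _ hmap hinj2
      _ = q ^ (n - D.card) := by
          rw [Finset.card_univ, Fintype.card_fun, hq, Fintype.card_coe, Finset.card_compl,
            Fintype.card_fin]
  have hq2 : 1 < q := hq ▸ Fintype.one_lt_card
  have hDn : D.card ≤ n := by
    have := Finset.card_le_univ D
    simpa using this
  rcases Nat.eq_zero_or_pos C.card with h0 | h0
  · rw [h0]
    simp only [Nat.cast_zero, Real.logb_zero]
    have hf1 : ((fLRC r t x : ℚ) : ℝ) ≤ 1 := by
      have hch : (n : ℚ) * fLRC r t x ≤ (n : ℚ) * 1 := by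
        calc (n : ℚ) * fLRC r t x ≤ (D.card : ℚ) := hDf
          _ ≤ (n : ℚ) := by exact_mod_cast hDn
          _ = (n : ℚ) * 1 := by ring
      have hnq : (0 : ℚ) < (n : ℚ) := by exact_mod_cast hn
      have := le_of_mul_le_mul_left hch hnq
      exact_mod_cast this
    have hn0 : (0 : ℝ) ≤ (n : ℝ) := by positivity
    nlinarith
  · have hq2r : (1 : ℝ) < (q : ℝ) := by exact_mod_cast hq2
    have hlog : Real.logb q C.card ≤ Real.logb q ((q : ℝ) ^ (n - D.card)) := by
      apply Real.logb_le_logb_of_le hq2r (by exact_mod_cast h0)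
      exact_mod_cast hcardC
    have hlog2 : Real.logb q ((q : ℝ) ^ (n - D.card)) = ((n - D.card : ℕ) : ℝ) := by
      rw [Real.logb_pow, Real.logb_self_eq_one hq2r, mul_one]
    have hcast : ((n - D.card : ℕ) : ℝ) = (n : ℝ) - (D.card : ℝ) := by
      have : D.card ≤ n := hDn
      push_cast [this]
      ring
    have hfr : (n : ℝ) * ((fLRC r t x : ℚ) : ℝ) ≤ (D.card : ℝ) := by
      have := hDf
      have h' : (((n : ℚ) * fLRC r t x : ℚ) : ℝ) ≤ ((D.card : ℚ) : ℝ) := by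
        exact_mod_cast this
      push_cast at h'
      exact_mod_cast h'
    calc Real.logb q C.card ≤ ((n - D.card : ℕ) : ℝ) := hlog.trans (le_of_eq hlog2)
      _ = (n : ℝ) - (D.card : ℝ) := hcast
      _ ≤ (n : ℝ) - (n : ℝ) * ((fLRC r t x : ℚ) : ℝ) := by linarith
      _ = (n : ℝ) * (1 - ((fLRC r t x : ℚ) : ℝ)) := by ring
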